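/- arXiv:0808.1657 — 2 statements merged into one kernel-verified Lean document; each statement's English description precedes it below -/
import Mathlib

section
/- Let A be a Sturmian binary sequence and let B be the characteristic Sturmian sequence with the same slope as A. Then the lexicographically least sequence in the orbit closure of A is 0B (the letter 0 followed by B), and the lexicographically greatest sequence in the orbit closure of A is 1B (the letter 1 followed by B). -/
/-- Lexicographic order on infinite sequences over a linearly ordered
alphabet: `x ≤ y` iff `x = y` or `x` and `y` agree before some position `n`
and `x n < y n`. -/
def SeqLexLe {Δ : Type*} [LinearOrder Δ] (x y : ℕ → Δ) : Prop :=
  x = y ∨ ∃ n : ℕ, (∀ m : ℕ, m < n → x m = y m) ∧ x n < y n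

/-- `b` lies in the orbit closure of `a`: every finite prefix of `b` is a
factor of `a`. -/
def InOrbitClosure {Δ : Type*} (a b : ℕ → Δ) : Prop :=
  ∀ n : ℕ, ∃ i : ℕ, ∀ m : ℕ, m < n → b m = a (i + m)

/-- `a` is a `k`-automatic sequence: there is a DFAO (finite state set `Fin n`,
transition `δ`, initial state `q0`, output `τ`) which, on every base-`k`
representation of `m` read least significant digit first (i.e. on `w^R`,
possibly with leading zeros in `w`), outputs `a m`. -/
def IsKAutomatic (k : ℕ) {Δ : Type*} (a : ℕ → Δ) : Prop :=
  ∃ (n : ℕ) (δ : Fin n → Fin k → Fin n) (q0 : Fin n) (τ : Fin n → Δ),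
    ∀ (m : ℕ) (w : List (Fin k)),
      Nat.ofDigits k (w.map Fin.val) = m → a m = τ (w.foldl δ q0)

/-- The set of factors of length `n` of the infinite word `A`. -/
def factorsOfLength (A : ℕ → ℤ) (n : ℕ) : Set (List ℤ) :=
  {w | ∃ i : ℕ, w = (List.range n).map fun m => A (i + m)}

/-- `A` is a Sturmian sequence: a binary sequence with exactly `n + 1`
distinct factors of each length `n`. -/
def IsSturmian (A : ℕ → ℤ) : Prop :=
  (∀ n : ℕ, A n = 0 ∨ A n = 1) ∧ ∀ n : ℕ, (factorsOfLength A n).ncard = n + 1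

/-- `A` has slope `α`: the frequency of the letter `1` in `A` is `α`. -/
def HasSlope (A : ℕ → ℤ) (α : ℝ) : Prop :=
  Filter.Tendsto (fun n => (∑ i ∈ Finset.range n, (A i : ℝ)) / n)
    Filter.atTop (nhds α)

/-- The characteristic Sturmian sequence of slope `α`:
`bₙ = ⌊(n+2)α⌋ - ⌊(n+1)α⌋`. -/
noncomputable def charSturmian (α : ℝ) (n : ℕ) : ℤ :=
  ⌊((n : ℝ) + 2) * α⌋ - ⌊((n : ℝ) + 1) * α⌋

/-- The sequence obtained by prepending the letter `c` to the sequence `B`. -/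
def consSeq (c : ℤ) (B : ℕ → ℤ) : ℕ → ℤ
  | 0 => c
  | n + 1 => B n


/-!
A binary sequence has `p (n + 1) - p n` right special factors of length `n`, so a Sturmian
sequence has exactly one of each length, and (Morse–Hedlund) it is not eventually periodic.
It is balanced: a shortest unbalanced pair of windows reads `c w c` and `d w d` with `c ≠ d`,
so `w` is right special and its occurrences cut the sequence into two return words. Counting
the factors of length `|w| + 1` along them gives return times `q₀ + q₁ = |w| + 2`. If each
return word ends with the letter it starts with, `c w` and `d w` are both right special; if
not, `w` is an extremal Fine–Wilf word for the periods `q₀, q₁` with impossible boundary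
letters.

Balance and the frequency `α` force every window of length `k` to contain `⌊k α⌋` or
`⌊k α⌋ + 1` ones, while the prefix sums of `0B` and `1B` are exactly `⌊k α⌋` and `⌊k α⌋ + 1`.
Smaller prefix sums mean lexicographically smaller, and windows starting where
`∑_{t < x} A t - x α` is near its supremum (infimum) realise the extreme sums for all lengths
up to any bound.
-/

def factorAt (b : ℕ → ℤ) (n i : ℕ) : List ℤ := (List.range n).map fun t => b (i + t)

def FactorEq (b : ℕ → ℤ) (n i j : ℕ) : Prop := ∀ t < n, b (i + t) = b (j + t)

def EventuallyPeriodic (b : ℕ → ℤ) : Prop := ∃ N P, 0 < P ∧ ∀ x, N ≤ x → b (x + P) = b x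

def factorsFollowedBy (b : ℕ → ℤ) (k : ℕ) (x : ℤ) : Set (List ℤ) :=
  {u | u ++ [x] ∈ factorsOfLength b (k + 1)}

def rightSpecialFactors (b : ℕ → ℤ) (k : ℕ) : Set (List ℤ) :=
  factorsFollowedBy b k 0 ∩ factorsFollowedBy b k 1

section Factors

variable {b : ℕ → ℤ} {k n i j : ℕ}

theorem factorAt_mem_factorsOfLength (b : ℕ → ℤ) (n i : ℕ) :
    factorAt b n i ∈ factorsOfLength b n := ⟨i, rfl⟩

theorem factorsOfLength_eq_range (b : ℕ → ℤ) (n : ℕ) :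
    factorsOfLength b n = Set.range (factorAt b n) := by
  ext u
  exact exists_congr fun i => eq_comm

theorem length_factorAt (b : ℕ → ℤ) (n i : ℕ) : (factorAt b n i).length = n := by
  simp [factorAt]

theorem factorAt_succ (b : ℕ → ℤ) (n i : ℕ) :
    factorAt b (n + 1) i = factorAt b n i ++ [b (i + n)] := by
  simp [factorAt, List.range_succ]

theorem factorAt_eq_factorAt_iff : factorAt b n i = factorAt b n j ↔ FactorEq b n i j := by
  simp [factorAt, FactorEq, List.map_inj_left]

theorem FactorEq.refl (b : ℕ → ℤ) (n i : ℕ) : FactorEq b n i i := fun _ _ => rfl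

theorem FactorEq.symm (h : FactorEq b n i j) : FactorEq b n j i := fun t ht => (h t ht).symm

theorem FactorEq.trans {l : ℕ} (h : FactorEq b n i j) (h' : FactorEq b n j l) : FactorEq b n i l :=
  fun t ht => (h t ht).trans (h' t ht)

theorem FactorEq.mono {n' : ℕ} (h : FactorEq b n i j) (hn : n' ≤ n) : FactorEq b n' i j :=
  fun t ht => h t (by omega)

theorem FactorEq.drop {d : ℕ} (h : FactorEq b (n + d) i j) : FactorEq b n (i + d) (j + d) := by
  intro t ht
  simpa only [add_assoc, add_comm d t] using h (d + t) (by omega)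

theorem FactorEq.snoc (h : FactorEq b n i j) (h' : b (i + n) = b (j + n)) :
    FactorEq b (n + 1) i j := by
  intro t ht
  rcases Nat.lt_succ_iff_lt_or_eq.mp ht with ht | rfl
  exacts [h t ht, h']

theorem FactorEq.cons (h : FactorEq b n (i + 1) (j + 1)) (h' : b i = b j) :
    FactorEq b (n + 1) i j := by
  rintro (_ | t) ht
  · simpa using h'
  · simpa only [add_assoc, add_comm 1 t] using h t (by omega)

theorem FactorEq.apply_eq_of_succ : ∀ {n : ℕ}, FactorEq b n i (i + 1) → b i = b (i + n)
  | 0, _ => rfl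
  | n + 1, h => (FactorEq.apply_eq_of_succ (h.mono n.le_succ)).trans
      (by simpa only [add_right_comm i 1 n, add_assoc] using h n (by omega))

theorem factorsFollowedBy_subset (x : ℤ) : factorsFollowedBy b k x ⊆ factorsOfLength b k := by
  rintro u ⟨i, hi⟩
  refine ⟨i, (List.append_inj (hi.trans (factorAt_succ b k i)) ?_).1⟩
  simpa [length_factorAt] using congrArg List.length hi

variable (hbin : ∀ n, b n = 0 ∨ b n = 1)
include hbin

theorem factorsFollowedBy_zero_union_one :
    factorsFollowedBy b k 0 ∪ factorsFollowedBy b k 1 = factorsOfLength b k := by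
  refine (Set.union_subset (factorsFollowedBy_subset 0) (factorsFollowedBy_subset 1)).antisymm ?_
  rw [factorsOfLength_eq_range]
  rintro _ ⟨i, rfl⟩
  have h : factorAt b k i ++ [b (i + k)] ∈ factorsOfLength b (k + 1) :=
    ⟨i, (factorAt_succ b k i).symm⟩
  rcases hbin (i + k) with h0 | h1
  · exact Or.inl (by rwa [h0] at h)
  · exact Or.inr (by rwa [h1] at h)

theorem factorsOfLength_succ :
    factorsOfLength b (k + 1) =
      (· ++ [0]) '' factorsFollowedBy b k 0 ∪ (· ++ [1]) '' factorsFollowedBy b k 1 := by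
  refine Set.Subset.antisymm ?_ (Set.union_subset ?_ ?_)
  · rw [factorsOfLength_eq_range]
    rintro _ ⟨i, rfl⟩
    have h : factorAt b k i ++ [b (i + k)] ∈ factorsOfLength b (k + 1) :=
      ⟨i, (factorAt_succ b k i).symm⟩
    rw [factorAt_succ]
    rcases hbin (i + k) with h0 | h1
    · exact Or.inl ⟨_, by rwa [h0] at h, by rw [h0]⟩
    · exact Or.inr ⟨_, by rwa [h1] at h, by rw [h1]⟩
  all_goals rintro _ ⟨u, hu, rfl⟩; exact hu

theorem finite_factorsOfLength (n : ℕ) : (factorsOfLength b n).Finite := by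
  induction n with
  | zero => exact (Set.finite_singleton []).subset (by rintro _ ⟨i, rfl⟩; simp)
  | succ n ih =>
    rw [factorsOfLength_succ hbin]
    exact ((ih.subset (factorsFollowedBy_subset 0)).image _).union
      ((ih.subset (factorsFollowedBy_subset 1)).image _)

/-- Each factor has one or two right extensions, two exactly for the right special ones. -/
theorem ncard_factorsOfLength_succ :
    (factorsOfLength b (k + 1)).ncard =
      (factorsOfLength b k).ncard + (rightSpecialFactors b k).ncard := by
  have hfin := finite_factorsOfLength hbin k
  have hdisj : Disjoint ((· ++ [(0 : ℤ)]) '' factorsFollowedBy b k 0)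
      ((· ++ [1]) '' factorsFollowedBy b k 1) := by
    rw [Set.disjoint_left]
    rintro _ ⟨u, -, rfl⟩ ⟨v, -, h⟩
    simpa using congrArg List.getLast? h
  have hfin0 := hfin.subset (factorsFollowedBy_subset (b := b) (k := k) 0)
  have hfin1 := hfin.subset (factorsFollowedBy_subset (b := b) (k := k) 1)
  rw [factorsOfLength_succ hbin, Set.ncard_union_eq hdisj (hfin0.image _) (hfin1.image _),
    Set.ncard_image_of_injective _ (List.append_left_injective _),
    Set.ncard_image_of_injective _ (List.append_left_injective _),
    ← factorsFollowedBy_zero_union_one hbin, rightSpecialFactors,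
    Set.ncard_union_add_ncard_inter _ _ hfin0 hfin1]

theorem factorAt_mem_rightSpecialFactors (h : FactorEq b k i j) (hne : b (i + k) ≠ b (j + k)) :
    factorAt b k i ∈ rightSpecialFactors b k := by
  have hi : factorAt b k i ++ [b (i + k)] ∈ factorsOfLength b (k + 1) :=
    ⟨i, (factorAt_succ b k i).symm⟩
  have hj : factorAt b k i ++ [b (j + k)] ∈ factorsOfLength b (k + 1) :=
    ⟨j, by rw [factorAt_eq_factorAt_iff.mpr h]; exact (factorAt_succ b k j).symm⟩
  rcases hbin (i + k) with h0 | h1 <;> rcases hbin (j + k) with h0' | h1'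
  · exact absurd (h0.trans h0'.symm) hne
  · exact ⟨by rwa [h0] at hi, by rwa [h1'] at hj⟩
  · exact ⟨by rwa [h0'] at hj, by rwa [h1] at hi⟩
  · exact absurd (h1.trans h1'.symm) hne

end Factors

section MorseHedlund

variable {b : ℕ → ℤ}

theorem EventuallyPeriodic.exists_ncard_factorsOfLength_le (h : EventuallyPeriodic b) :
    ∃ C, ∀ n, (factorsOfLength b n).ncard ≤ C := by
  obtain ⟨N, P, hP, hper⟩ := h
  refine ⟨N + P, fun n => ?_⟩
  have hearly : ∀ i, ∃ i' < N + P, FactorEq b n i i' := by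
    intro i
    induction i using Nat.strong_induction_on with
    | _ i ih =>
      by_cases hi : i < N + P
      · exact ⟨i, hi, FactorEq.refl b n i⟩
      obtain ⟨i', hi', hw⟩ := ih (i - P) (by omega)
      refine ⟨i', hi', FactorEq.trans (fun t _ => ?_) hw⟩
      rw [← hper (i - P + t) (by omega)]
      congr 1
      omega
  have hsub : factorsOfLength b n ⊆ factorAt b n '' Set.Iio (N + P) := by
    rw [factorsOfLength_eq_range]
    rintro _ ⟨i, rfl⟩
    obtain ⟨i', hi', hw⟩ := hearly i
    exact ⟨i', hi', factorAt_eq_factorAt_iff.mpr hw.symm⟩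
  calc (factorsOfLength b n).ncard ≤ (factorAt b n '' Set.Iio (N + P)).ncard :=
        Set.ncard_le_ncard hsub ((Set.finite_Iio _).image _)
    _ ≤ (Set.Iio (N + P)).ncard := Set.ncard_image_le (Set.finite_Iio _)
    _ = N + P := by simp

theorem EventuallyPeriodic.of_shift {N : ℕ} (h : EventuallyPeriodic fun x => b (N + x)) :
    EventuallyPeriodic b := by
  obtain ⟨M, P, hP, hper⟩ := h
  refine ⟨N + M, P, hP, fun x hx => ?_⟩
  have : b (N + (x - N + P)) = b (N + (x - N)) := hper (x - N) (by omega)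
  rwa [show N + (x - N + P) = x + P by omega, show N + (x - N) = x by omega] at this

variable (hbin : ∀ n, b n = 0 ∨ b n = 1)
include hbin

theorem eventuallyPeriodic_of_rightSpecialFactors_eq_empty {k : ℕ}
    (hk : rightSpecialFactors b k = ∅) : EventuallyPeriodic b := by
  have hdet : ∀ i j, FactorEq b k i j → b (i + k) = b (j + k) := fun i j h => by
    by_contra hne
    exact Set.eq_empty_iff_forall_notMem.mp hk _ (factorAt_mem_rightSpecialFactors hbin h hne)
  obtain ⟨i, j, hij, hw⟩ := (finite_factorsOfLength hbin k).exists_lt_map_eq_of_forall_mem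
    (factorAt_mem_factorsOfLength b k)
  have hlong : ∀ t, FactorEq b (k + t) i j := by
    intro t
    induction t with
    | zero => exact factorAt_eq_factorAt_iff.mp hw
    | succ t ih =>
      have := hdet _ _ ih.drop
      exact ih.snoc (by simpa only [add_assoc, add_comm t k] using this)
  refine ⟨i, j - i, by omega, fun x hx => ?_⟩
  have := hlong (x - i + 1) (x - i) (by omega)
  rw [show i + (x - i) = x by omega, show j + (x - i) = x + (j - i) by omega] at this
  exact this.symm

/-- Morse–Hedlund. -/
theorem eventuallyPeriodic_of_ncard_factorsOfLength_le {L : ℕ}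
    (hL : (factorsOfLength b L).ncard ≤ L) : EventuallyPeriodic b := by
  by_contra hb
  have hgrow : ∀ k, k + 1 ≤ (factorsOfLength b k).ncard := by
    intro k
    induction k with
    | zero =>
      exact (Set.ncard_pos (finite_factorsOfLength hbin 0)).mpr
        ⟨_, factorAt_mem_factorsOfLength b 0 0⟩
    | succ k ih =>
      have hne : (rightSpecialFactors b k).Nonempty := Set.nonempty_iff_ne_empty.mpr
        fun hk => hb (eventuallyPeriodic_of_rightSpecialFactors_eq_empty hbin hk)
      have hpos : 0 < (rightSpecialFactors b k).ncard :=
        (Set.ncard_pos ((finite_factorsOfLength hbin k).subset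
          (Set.inter_subset_left.trans (factorsFollowedBy_subset 0)))).mpr hne
      rw [ncard_factorsOfLength_succ hbin]
      omega
  exact absurd (hgrow L) (by omega)

end MorseHedlund

namespace IsSturmian

variable {A : ℕ → ℤ} (hA : IsSturmian A)
include hA

theorem ncard_rightSpecialFactors (k : ℕ) : (rightSpecialFactors A k).ncard = 1 := by
  have := ncard_factorsOfLength_succ hA.1 (k := k)
  rw [hA.2, hA.2] at this
  omega

theorem factorEq_of_rightSpecial {k i j i' j' : ℕ} (h : FactorEq A k i j)
    (hne : A (i + k) ≠ A (j + k)) (h' : FactorEq A k i' j') (hne' : A (i' + k) ≠ A (j' + k)) :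
    FactorEq A k i i' := by
  obtain ⟨u, hu⟩ := Set.ncard_eq_one.mp (hA.ncard_rightSpecialFactors k)
  have hi := factorAt_mem_rightSpecialFactors hA.1 h hne
  have hi' := factorAt_mem_rightSpecialFactors hA.1 h' hne'
  rw [hu] at hi hi'
  exact factorAt_eq_factorAt_iff.mp (hi.trans hi'.symm)

theorem not_eventuallyPeriodic : ¬ EventuallyPeriodic A := fun h => by
  obtain ⟨C, hC⟩ := h.exists_ncard_factorsOfLength_le
  have := hC (C + 1)
  rw [hA.2] at this
  omega

theorem exists_factorEq_ge (n i N : ℕ) : ∃ j, N ≤ j ∧ FactorEq A n j i := by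
  by_contra! h
  refine hA.not_eventuallyPeriodic (EventuallyPeriodic.of_shift (N := N)
    (eventuallyPeriodic_of_ncard_factorsOfLength_le (fun x => hA.1 (N + x)) (L := n) ?_))
  have hsub : factorsOfLength (fun x => A (N + x)) n ⊆ factorsOfLength A n \ {factorAt A n i} := by
    rw [factorsOfLength_eq_range]
    rintro _ ⟨x, rfl⟩
    have hx : factorAt (fun x => A (N + x)) n x = factorAt A n (N + x) := by
      simp only [factorAt, add_assoc]
    rw [hx]
    exact ⟨factorAt_mem_factorsOfLength A n _,
      fun he => h (N + x) (by omega) (factorAt_eq_factorAt_iff.mp he)⟩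
  calc _ ≤ (factorsOfLength A n \ {factorAt A n i}).ncard :=
        Set.ncard_le_ncard hsub (finite_factorsOfLength hA.1 n).sdiff
    _ = n := by
      rw [Set.ncard_sdiff_singleton_of_mem (factorAt_mem_factorsOfLength A n i), hA.2]
      rfl

end IsSturmian

def windowSum (b : ℕ → ℤ) (i k : ℕ) : ℤ := ∑ t ∈ Finset.range k, b (i + t)

def IsBalanced (b : ℕ → ℤ) : Prop := ∀ k i j, windowSum b j k ≤ windowSum b i k + 1

section WindowSum

variable {b : ℕ → ℤ}

@[simp]
theorem windowSum_zero (b : ℕ → ℤ) (i : ℕ) : windowSum b i 0 = 0 := rfl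

theorem windowSum_succ (b : ℕ → ℤ) (i k : ℕ) :
    windowSum b i (k + 1) = windowSum b i k + b (i + k) :=
  Finset.sum_range_succ _ _

theorem windowSum_add (b : ℕ → ℤ) (i k l : ℕ) :
    windowSum b i (k + l) = windowSum b i k + windowSum b (i + k) l := by
  simp only [windowSum, Finset.sum_range_add, add_assoc]

variable (hbin : ∀ n, b n = 0 ∨ b n = 1)
include hbin

theorem windowSum_nonneg (i k : ℕ) : 0 ≤ windowSum b i k :=
  Finset.sum_nonneg fun t _ => by rcases hbin (i + t) with h | h <;> simp [h]

theorem windowSum_le (i k : ℕ) : windowSum b i k ≤ k := by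
  induction k with
  | zero => simp
  | succ k ih => rcases hbin (i + k) with h | h <;> (rw [windowSum_succ, h]; push_cast; omega)

/-- Minimality, applied to prefixes and to suffixes, pins the difference of the partial sums of
the two windows to `1` strictly inside. -/
theorem exists_factorEq_of_unbalanced {k i j : ℕ}
    (hmin : ∀ k' < k, ∀ i' j', windowSum b j' k' ≤ windowSum b i' k' + 1)
    (hij : windowSum b i k + 2 ≤ windowSum b j k) :
    ∃ m, FactorEq b m (i + 1) (j + 1) ∧ b i = 0 ∧ b (i + 1 + m) = 0 ∧
      b j = 1 ∧ b (j + 1 + m) = 1 := by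
  set d : ℕ → ℤ := fun s => windowSum b j s - windowSum b i s with hd
  have hstep : ∀ s, b (j + s) - b (i + s) = d (s + 1) - d s := fun s => by
    simp only [hd, windowSum_succ]
    ring
  have hletters : ∀ s, 1 ≤ d (s + 1) - d s → b (j + s) = 1 ∧ b (i + s) = 0 := fun s hs => by
    rw [← hstep] at hs
    rcases hbin (j + s) with h | h <;> rcases hbin (i + s) with h' | h' <;> rw [h, h'] at hs ⊢ <;>
      simp_all
  have hk : 2 ≤ k := by
    have := windowSum_le hbin j k
    have := windowSum_nonneg hbin i k
    omega
  have hone : ∀ s, 1 ≤ s → s < k → d s = 1 := by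
    intro s hs hsk
    have hpre := hmin s hsk i j
    have hsuf := hmin (k - s) (by omega) (i + s) (j + s)
    have hi := windowSum_add b i s (k - s)
    have hj := windowSum_add b j s (k - s)
    rw [Nat.add_sub_cancel' hsk.le] at hi hj
    simp only [hd]
    omega
  obtain ⟨hj, hi⟩ := hletters 0 (by rw [zero_add, hone 1 le_rfl (by omega)]; simp [hd])
  obtain ⟨hjk, hik⟩ := hletters (k - 1) (by
    rw [Nat.sub_add_cancel (by omega), hone (k - 1) (by omega) (by omega)]
    simp only [hd]
    omega)
  refine ⟨k - 2, fun t ht => ?_, by simpa using hi, ?_, by simpa using hj, ?_⟩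
  · have := hstep (t + 1)
    rw [hone (t + 1) (by omega) (by omega), hone (t + 1 + 1) (by omega) (by omega)] at this
    rw [add_right_comm i, add_right_comm j, add_assoc i, add_assoc j]
    omega
  · rwa [show i + 1 + (k - 2) = i + (k - 1) by omega]
  · rwa [show j + 1 + (k - 2) = j + (k - 1) by omega]

end WindowSum

-- `0` when the factor of length `m` at `p` does not occur after `x`.
noncomputable def returnTime (b : ℕ → ℤ) (m p x : ℕ) : ℕ :=
  sInf {d | 0 < d ∧ FactorEq b m (x + d) p}

noncomputable def letterBeforeReturn (b : ℕ → ℤ) (m p x : ℕ) : ℤ :=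
  b (x + returnTime b m p x - 1)

section ReturnTime

variable {b : ℕ → ℤ} {m p : ℕ}

theorem returnTime_le {x d : ℕ} (hd : 0 < d) (h : FactorEq b m (x + d) p) :
    returnTime b m p x ≤ d :=
  Nat.sInf_le ⟨hd, h⟩

theorem not_factorEq_of_lt_returnTime {x d : ℕ} (hd : 0 < d) (hlt : d < returnTime b m p x) :
    ¬ FactorEq b m (x + d) p :=
  fun h => Nat.notMem_of_lt_sInf hlt ⟨hd, h⟩

theorem eq_add_returnTime {x j : ℕ} (hj : FactorEq b m j p) (hxj : x < j)
    (hjx : j ≤ x + returnTime b m p x) : j = x + returnTime b m p x := by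
  by_contra hne
  refine not_factorEq_of_lt_returnTime (b := b) (m := m) (p := p) (x := x) (d := j - x)
    (by omega) (by omega) ?_
  rwa [Nat.add_sub_cancel' hxj.le]

-- No factor of length `m` other than the one at `p` is right special.
variable (hdet : ∀ i j, FactorEq b m i j → ¬ FactorEq b m i p → b (i + m) = b (j + m))

include hdet in
theorem factorEq_extend {i j n : ℕ} (h : FactorEq b (m + 1) i j)
    (hno : ∀ s, 0 < s → s ≤ n → ¬ FactorEq b m (i + s) p) : FactorEq b (m + 1 + n) i j := by
  induction n with
  | zero => exact h
  | succ n ih =>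
    have hlong := ih fun s hs hsn => hno s hs (by omega)
    have hnext := hdet _ _ (hlong.mono (by omega : m + (n + 1) ≤ m + 1 + n)).drop
      (hno (n + 1) (by omega) le_rfl)
    refine hlong.snoc ?_
    rwa [show i + (m + 1 + n) = i + (n + 1) + m by omega,
      show j + (m + 1 + n) = j + (n + 1) + m by omega]

variable (hrec : ∀ x, ∃ d, 0 < d ∧ FactorEq b m (x + d) p)
include hrec

theorem returnTime_pos (x : ℕ) : 0 < returnTime b m p x :=
  (Nat.sInf_mem (hrec x)).1

theorem factorEq_returnTime (x : ℕ) : FactorEq b m (x + returnTime b m p x) p :=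
  (Nat.sInf_mem (hrec x)).2

theorem letterBeforeReturn_eq_of_returnTime_eq_one {x : ℕ} (hx : FactorEq b m x p)
    (h : returnTime b m p x = 1) : letterBeforeReturn b m p x = b (x + m) := by
  have hnext := factorEq_returnTime hrec x
  rw [h] at hnext
  rw [letterBeforeReturn, h, Nat.add_sub_cancel]
  exact (hx.trans hnext.symm).apply_eq_of_succ

theorem returnTime_add {x d : ℕ} (hd : d < returnTime b m p x) :
    returnTime b m p (x + d) = returnTime b m p x - d := by
  refine le_antisymm (returnTime_le (by omega) ?_) ?_
  · rw [add_assoc, Nat.add_sub_cancel' hd.le]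
    exact factorEq_returnTime hrec x
  · by_contra! hlt
    refine not_factorEq_of_lt_returnTime (b := b) (m := m) (p := p) (x := x)
      (d := d + returnTime b m p (x + d))
      (by have := returnTime_pos hrec (x + d); omega) (by omega) ?_
    rw [← add_assoc]
    exact factorEq_returnTime hrec (x + d)

theorem exists_le_lt_add_returnTime {base z : ℕ} (hbase : FactorEq b m base p) (hz : base ≤ z) :
    ∃ x, FactorEq b m x p ∧ base ≤ x ∧ x ≤ z ∧ z < x + returnTime b m p x := by
  classical
  set x := Nat.findGreatest (fun x => FactorEq b m x p) z
  refine ⟨x, Nat.findGreatest_spec (P := fun x => FactorEq b m x p) hz hbase,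
    Nat.le_findGreatest hz hbase, Nat.findGreatest_le z, ?_⟩
  by_contra! h
  exact Nat.findGreatest_is_greatest (P := fun x => FactorEq b m x p)
    (by have := returnTime_pos hrec x; omega) h (factorEq_returnTime hrec x)

theorem exists_eq_add_returnTime {base j : ℕ} (hbase : FactorEq b m base p)
    (hj : FactorEq b m j p) (hbj : base < j) :
    ∃ x, FactorEq b m x p ∧ base ≤ x ∧ j = x + returnTime b m p x := by
  obtain ⟨x, hx, hbx, hxj, hjx⟩ := exists_le_lt_add_returnTime hrec hbase (z := j - 1) (by omega)
  exact ⟨x, hx, hbx, eq_add_returnTime hj (by omega) (by omega)⟩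

theorem letterBeforeReturn_add {x o : ℕ} (ho : o < returnTime b m p x) :
    letterBeforeReturn b m p (x + o) = letterBeforeReturn b m p x := by
  rw [letterBeforeReturn, letterBeforeReturn, returnTime_add hrec ho]
  congr 1
  omega

include hdet

theorem factorEq_returnTime_add_of_factorEq {i j : ℕ} (h : FactorEq b (m + 1) i j) :
    FactorEq b (returnTime b m p i + m) i j := by
  have hpos := returnTime_pos hrec i
  refine (factorEq_extend hdet h (n := returnTime b m p i - 1) fun s hs hsn =>
    not_factorEq_of_lt_returnTime hs (by omega)).mono (by omega)

theorem returnTime_eq_of_factorEq {i j : ℕ} (h : FactorEq b (m + 1) i j) :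
    returnTime b m p j = returnTime b m p i := by
  have hlong := factorEq_returnTime_add_of_factorEq hdet hrec h
  have hocc : ∀ s ≤ returnTime b m p i, FactorEq b m (j + s) p ↔ FactorEq b m (i + s) p := by
    intro s hs
    have : FactorEq b m (i + s) (j + s) := (hlong.mono (by omega : m + s ≤ _)).drop
    exact ⟨this.trans, this.symm.trans⟩
  refine le_antisymm (returnTime_le (returnTime_pos hrec i)
    ((hocc _ le_rfl).mpr (factorEq_returnTime hrec i))) ?_
  by_contra! hlt
  exact not_factorEq_of_lt_returnTime (returnTime_pos hrec j) hlt
    ((hocc _ hlt.le).mp (factorEq_returnTime hrec j))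

theorem letterBeforeReturn_eq_of_factorEq {i j : ℕ} (h : FactorEq b (m + 1) i j) :
    letterBeforeReturn b m p i = letterBeforeReturn b m p j := by
  have hpos := returnTime_pos hrec i
  have := factorEq_returnTime_add_of_factorEq hdet hrec h (returnTime b m p i - 1) (by omega)
  rw [letterBeforeReturn, letterBeforeReturn, returnTime_eq_of_factorEq hdet hrec h]
  rwa [Nat.add_sub_assoc hpos, Nat.add_sub_assoc hpos]

theorem returnTime_sub_eq_of_factorEq {x y o o' : ℕ} (ho : o < returnTime b m p x)
    (ho' : o' < returnTime b m p y) (h : FactorEq b (m + 1) (x + o) (y + o')) :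
    returnTime b m p x - o = returnTime b m p y - o' := by
  rw [← returnTime_add hrec ho, ← returnTime_add hrec ho', returnTime_eq_of_factorEq hdet hrec h]

theorem factorEq_add_sub_of_factorEq {x y z : ℕ} (h : FactorEq b (m + 1) y x) (hxz : x ≤ z)
    (hz : z < x + returnTime b m p x) :
    FactorEq b (m + 1) z (y + (z - x)) ∧ z - x < returnTime b m p y := by
  rw [returnTime_eq_of_factorEq hdet hrec h] at hz
  refine ⟨?_, by omega⟩
  have := ((factorEq_returnTime_add_of_factorEq hdet hrec h).mono
    (by omega : m + 1 + (z - x) ≤ _)).drop (d := z - x)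
  rw [Nat.add_sub_cancel' hxz] at this
  exact this.symm

/-- Otherwise the sequence would be periodic, with the return time of `base` as a period. -/
theorem exists_letter_ne_after_returnTime (hap : ¬ EventuallyPeriodic b) {base : ℕ}
    (hbase : FactorEq b m base p) :
    ∃ x, FactorEq b m x p ∧ b (x + m) = b (base + m) ∧
      b (x + returnTime b m p x + m) ≠ b (base + m) := by
  by_contra! hsw
  have hall : ∀ j, FactorEq b m j p → base ≤ j → b (j + m) = b (base + m) := by
    intro j
    induction j using Nat.strong_induction_on with
    | _ j ih =>
      intro hj hbj
      rcases hbj.eq_or_lt with rfl | hlt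
      · rfl
      obtain ⟨x, hx, hbx, rfl⟩ := exists_eq_add_returnTime hrec hbase hj hlt
      exact hsw x hx (ih x (by have := returnTime_pos hrec x; omega) hx hbx)
  refine hap ⟨base, returnTime b m p base, returnTime_pos hrec base, fun z hz => ?_⟩
  obtain ⟨x, hx, hbx, hxz, hzx⟩ := exists_le_lt_add_returnTime hrec hbase hz
  have hnext := factorEq_returnTime hrec x
  have hx' : FactorEq b (m + 1) base x := (hbase.trans hx.symm).snoc (hall x hx hbx).symm
  have hper : FactorEq b (m + 1) x (x + returnTime b m p x) :=
    (hx.trans hnext.symm).snoc ((hall x hx hbx).trans (hall _ hnext (by omega)).symm)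
  have := factorEq_returnTime_add_of_factorEq hdet hrec hper (z - x) (by omega)
  rw [← returnTime_eq_of_factorEq hdet hrec hx']
  rw [add_right_comm, Nat.add_sub_cancel' hxz] at this
  exact this.symm

end ReturnTime

/-- If `w c₀` has period `q₀` and `w c₁` has period `q₁`, where `w` has the length `q₀ + q₁ - 2`
of the extremal case of the Fine–Wilf theorem, then `w` cannot read `c₁` at `q₀ - 1` and `c₀`
at `q₁ - 1`. The proof runs the Euclidean algorithm on `(q₀, q₁)`. -/
theorem false_of_periods {c₀ c₁ : ℤ} (hc : c₀ ≠ c₁) (w : ℕ → ℤ) {m q₀ q₁ : ℕ}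
    (hm : m + 2 = q₀ + q₁) (hq₀ : 2 ≤ q₀) (hq₁ : 2 ≤ q₁)
    (hper₀ : ∀ j, j + q₀ < m → w j = w (j + q₀)) (hend₀ : w (m - q₀) = c₀)
    (hper₁ : ∀ j, j + q₁ < m → w j = w (j + q₁)) (hend₁ : w (m - q₁) = c₁)
    (h₀ : w (q₀ - 1) = c₁) (h₁ : w (q₁ - 1) = c₀) : False := by
  rcases lt_trichotomy q₀ q₁ with hlt | rfl | hgt
  · by_cases hq : q₁ = q₀ + 1
    · subst hq
      have hconst : ∀ j ≤ q₀ - 2, w j = w 0 := by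
        intro j
        induction j with
        | zero => exact fun _ => rfl
        | succ j ih =>
          intro hj
          rw [← ih (by omega), hper₀ (j + 1) (by omega), hper₁ j (by omega)]
          congr 1
          omega
      have h0 : w 0 = c₀ := by
        rw [hper₀ 0 (by omega), zero_add, ← h₁, Nat.add_sub_cancel]
      exact hc (h0.symm.trans ((hconst _ le_rfl).symm.trans
        (by rw [← hend₁]; congr 1; omega)))
    · refine false_of_periods hc w (m := m - q₀) (q₁ := q₁ - q₀) (by omega) hq₀ (by omega)
        (fun j hj => hper₀ j (by omega)) ?_ (fun j hj => ?_) ?_ h₀ ?_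
      · rw [← hend₀, hper₀ _ (by omega)]
        congr 1
        omega
      · rw [hper₁ j (by omega), hper₀ (j + (q₁ - q₀)) (by omega)]
        congr 1
        omega
      · rw [← hend₁]
        congr 1
        omega
      · rw [← h₁, hper₀ _ (by omega)]
        congr 1
        omega
  · exact hc (hend₀.symm.trans hend₁)
  · exact false_of_periods hc.symm w (by omega) hq₁ hq₀ hper₁ hend₁ hper₀ hend₀ h₁ h₀
termination_by 2 * q₀ + q₁

namespace IsSturmian

variable {A : ℕ → ℤ} (hA : IsSturmian A)
include hA

theorem exists_pos_factorEq (m p x : ℕ) : ∃ d, 0 < d ∧ FactorEq A m (x + d) p := by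
  obtain ⟨j, hj, hjp⟩ := hA.exists_factorEq_ge m p (x + 1)
  exact ⟨j - x, by omega, by rwa [Nat.add_sub_cancel' (by omega)]⟩

theorem letter_eq_of_not_factorEq {m p r : ℕ} (hpr : FactorEq A m p r)
    (hne : A (p + m) ≠ A (r + m)) (i j : ℕ) (h : FactorEq A m i j) (hi : ¬ FactorEq A m i p) :
    A (i + m) = A (j + m) := by
  by_contra hij
  exact hi (hA.factorEq_of_rightSpecial h hij hpr hne)

section RightSpecial

-- `w`, the factor of length `m` at `p` and at `r`, is right special.
variable {m p r : ℕ} (hpr : FactorEq A m p r) (hne : A (p + m) ≠ A (r + m))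
include hpr hne

theorem factorEq_succ_or {x : ℕ} (hx : FactorEq A m x p) :
    FactorEq A (m + 1) x p ∨ FactorEq A (m + 1) x r := by
  have := hA.1 (x + m)
  have := hA.1 (p + m)
  have := hA.1 (r + m)
  rcases (by omega : A (x + m) = A (p + m) ∨ A (x + m) = A (r + m)) with h | h
  exacts [Or.inl (hx.snoc h), Or.inr ((hx.trans hpr).snoc h)]

theorem letterBeforeReturn_eq_or {j : ℕ} (hj : FactorEq A m j p) (hpj : p < j) :
    A (j - 1) = letterBeforeReturn A m p p ∨ A (j - 1) = letterBeforeReturn A m p r := by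
  have hdet := hA.letter_eq_of_not_factorEq hpr hne
  have hrec := hA.exists_pos_factorEq m p
  obtain ⟨x, hx, -, rfl⟩ := exists_eq_add_returnTime hrec (FactorEq.refl A m p) hj hpj
  rcases hA.factorEq_succ_or hpr hne hx with h | h
  exacts [Or.inl (letterBeforeReturn_eq_of_factorEq hdet hrec h),
    Or.inr (letterBeforeReturn_eq_of_factorEq hdet hrec h)]

/-- `A (p - 1)` and `A (r - 1)` recur in front of later occurrences of `w`, and the letter in
front of any such occurrence ends one of the two return words. -/
theorem letterBeforeReturn_ne (hp : 0 < p) (hr : 0 < r) (hpr' : A (p - 1) ≠ A (r - 1)) :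
    letterBeforeReturn A m p p ≠ letterBeforeReturn A m p r := by
  have hpred : ∀ y, 0 < y → FactorEq A m y p →
      A (y - 1) = letterBeforeReturn A m p p ∨ A (y - 1) = letterBeforeReturn A m p r := by
    intro y hy hyp
    obtain ⟨j, hj, hjy⟩ := hA.exists_factorEq_ge (m + 1) (y - 1) p
    have hocc : FactorEq A m (j + 1) p := by
      have := hjy.drop (d := 1)
      rw [Nat.sub_add_cancel hy] at this
      exact this.trans hyp
    have := hA.letterBeforeReturn_eq_or hpr hne hocc (by omega)
    rwa [Nat.add_sub_cancel, ← add_zero j, hjy 0 (by omega), add_zero] at this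
  intro he
  rcases hpred p hp (FactorEq.refl A m p) with h | h <;>
    rcases hpred r hr hpr.symm with h' | h' <;> exact hpr' (by simp only [h, h', he])

theorem factorsOfLength_succ_eq_union :
    factorsOfLength A (m + 1) =
      (fun o => factorAt A (m + 1) (p + o)) '' Set.Iio (returnTime A m p p) ∪
      (fun o => factorAt A (m + 1) (r + o)) '' Set.Iio (returnTime A m p r) := by
  have hdet := hA.letter_eq_of_not_factorEq hpr hne
  have hrec := hA.exists_pos_factorEq m p
  refine Set.Subset.antisymm ?_ (Set.union_subset ?_ ?_)
  · rw [factorsOfLength_eq_range]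
    rintro _ ⟨i, rfl⟩
    obtain ⟨j, hj, hji⟩ := hA.exists_factorEq_ge (m + 1) i p
    obtain ⟨x, hx, -, hxj, hjx⟩ := exists_le_lt_add_returnTime hrec (FactorEq.refl A m p) hj
    rw [factorAt_eq_factorAt_iff.mpr hji.symm]
    rcases hA.factorEq_succ_or hpr hne hx with h | h
    · obtain ⟨h', hlt⟩ := factorEq_add_sub_of_factorEq hdet hrec h.symm hxj hjx
      exact Or.inl ⟨j - x, hlt, (factorAt_eq_factorAt_iff.mpr h').symm⟩
    · obtain ⟨h', hlt⟩ := factorEq_add_sub_of_factorEq hdet hrec h.symm hxj hjx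
      exact Or.inr ⟨j - x, hlt, (factorAt_eq_factorAt_iff.mpr h').symm⟩
  all_goals rintro _ ⟨o, -, rfl⟩; exact factorAt_mem_factorsOfLength A _ _

/-- The factors of length `m + 1` are read, without repetition, along the two return words. -/
theorem returnTime_add_returnTime
    (he : letterBeforeReturn A m p p ≠ letterBeforeReturn A m p r) :
    returnTime A m p p + returnTime A m p r = m + 2 := by
  have hdet := hA.letter_eq_of_not_factorEq hpr hne
  have hrec := hA.exists_pos_factorEq m p
  have hinj : ∀ x, Set.InjOn (fun o => factorAt A (m + 1) (x + o))
      (Set.Iio (returnTime A m p x)) := by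
    intro x o ho o' ho' h
    have := returnTime_sub_eq_of_factorEq hdet hrec ho ho' (factorAt_eq_factorAt_iff.mp h)
    rw [Set.mem_Iio] at ho ho'
    omega
  have hdisj : Disjoint ((fun o => factorAt A (m + 1) (p + o)) '' Set.Iio (returnTime A m p p))
      ((fun o => factorAt A (m + 1) (r + o)) '' Set.Iio (returnTime A m p r)) := by
    rw [Set.disjoint_left]
    rintro _ ⟨o, ho, rfl⟩ ⟨o', ho', h⟩
    apply he
    rw [← letterBeforeReturn_add hrec ho, ← letterBeforeReturn_add hrec ho']
    exact letterBeforeReturn_eq_of_factorEq hdet hrec (factorAt_eq_factorAt_iff.mp h.symm)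
  have := hA.2 (m + 1)
  rw [hA.factorsOfLength_succ_eq_union hpr hne,
    Set.ncard_union_eq hdisj ((Set.finite_Iio _).image _) ((Set.finite_Iio _).image _),
    (hinj p).ncard_image, (hinj r).ncard_image] at this
  simpa using this

/-- If each return word ends with the letter it starts with, the occurrences of `w` after which
the next letter switches make both factors of length `m + 1` ending with `w` at `p` and at `r`
right special. -/
theorem false_of_letterBeforeReturn_eq (hp : 0 < p) (hr : 0 < r) (hp' : A (p - 1) = A (p + m))
    (hr' : A (r - 1) = A (r + m)) (he : letterBeforeReturn A m p p = A (p + m))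
    (he' : letterBeforeReturn A m p r = A (r + m)) : False := by
  have hdet := hA.letter_eq_of_not_factorEq hpr hne
  have hrec := hA.exists_pos_factorEq m p
  have hswitch : ∀ y, 0 < y → FactorEq A m y p → A (y - 1) = A (y + m) →
      letterBeforeReturn A m p y = A (y + m) → ∃ j, FactorEq A (m + 1) j (y - 1) ∧
        A (j + (m + 1)) ≠ A (y - 1 + (m + 1)) ∧ A j = A (y + m) := by
    intro y hy hyp hy' hey
    obtain ⟨x, hx, hxy, hsw⟩ :=
      exists_letter_ne_after_returnTime hdet hrec hA.not_eventuallyPeriodic hyp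
    have hpos := returnTime_pos hrec x
    have hlast : A (x + returnTime A m p x - 1) = A (y + m) :=
      hey ▸ letterBeforeReturn_eq_of_factorEq hdet hrec ((hx.trans hyp.symm).snoc hxy)
    refine ⟨x + returnTime A m p x - 1, FactorEq.cons ?_ (hlast.trans hy'.symm), ?_, hlast⟩
    · rw [Nat.sub_add_cancel (by omega), Nat.sub_add_cancel hy]
      exact (factorEq_returnTime hrec x).trans hyp.symm
    · rwa [show x + returnTime A m p x - 1 + (m + 1) = x + returnTime A m p x + m by omega,
        show y - 1 + (m + 1) = y + m by omega]
  obtain ⟨j, hj, hj', hjp⟩ := hswitch p hp (FactorEq.refl A m p) hp' he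
  obtain ⟨j', hr₁, hr₂, hjr⟩ := hswitch r hr hpr.symm hr' he'
  have := hA.factorEq_of_rightSpecial hj hj' hr₁ hr₂ 0 (by omega)
  exact hne (by simpa [hjp, hjr] using this)

/-- If each return word ends with the letter the other one starts with, `w` is an extremal
Fine–Wilf word whose boundary letters are impossible. -/
theorem false_of_letterBeforeReturn_swap (he : letterBeforeReturn A m p p = A (r + m))
    (he' : letterBeforeReturn A m p r = A (p + m)) : False := by
  have hrec := hA.exists_pos_factorEq m p
  have hsum := hA.returnTime_add_returnTime hpr hne (by rw [he, he']; exact hne.symm)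
  have hq₀ : 2 ≤ returnTime A m p p := by
    by_contra! h
    have := letterBeforeReturn_eq_of_returnTime_eq_one hrec (FactorEq.refl A m p)
      (by have := returnTime_pos hrec p; omega)
    exact hne (this.symm.trans he)
  have hq₁ : 2 ≤ returnTime A m p r := by
    by_contra! h
    have := letterBeforeReturn_eq_of_returnTime_eq_one hrec hpr.symm
      (by have := returnTime_pos hrec r; omega)
    exact hne (he'.symm.trans this)
  have hp₀ := factorEq_returnTime hrec p
  have hr₁ := factorEq_returnTime hrec r
  refine false_of_periods hne (fun t => A (p + t)) hsum.symm hq₀ hq₁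
    (fun j hj => ?_) ?_ (fun j hj => ?_) ?_ ?_ ?_
  · rw [← hp₀ j (by omega)]
    congr 1
    omega
  · rw [← hp₀ _ (by omega)]
    congr 1
    omega
  · rw [← hr₁ j (by omega), hpr (j + _) (by omega)]
    congr 1
    omega
  · rw [← hr₁ _ (by omega)]
    congr 1
    omega
  · rw [← he, letterBeforeReturn]
    congr 1
    omega
  · rw [hpr _ (by omega), ← he', letterBeforeReturn]
    congr 1
    omega

theorem false_of_factorEq_of_pred_eq (hp : 0 < p) (hr : 0 < r) (hp' : A (p - 1) = A (p + m))
    (hr' : A (r - 1) = A (r + m)) : False := by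
  have he := hA.letterBeforeReturn_ne hpr hne hp hr (by rwa [hp', hr'])
  have h₀ : letterBeforeReturn A m p p = 0 ∨ letterBeforeReturn A m p p = 1 := hA.1 _
  have h₁ : letterBeforeReturn A m p r = 0 ∨ letterBeforeReturn A m p r = 1 := hA.1 _
  have := hA.1 (p + m)
  have := hA.1 (r + m)
  by_cases h : letterBeforeReturn A m p p = A (p + m)
  · exact hA.false_of_letterBeforeReturn_eq hpr hne hp hr hp' hr' h (by omega)
  · exact hA.false_of_letterBeforeReturn_swap hpr hne (by omega) (by omega)

end RightSpecial

theorem isBalanced : IsBalanced A := by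
  intro k i j
  induction k using Nat.strong_induction_on generalizing i j with
  | _ k ih =>
    by_contra! h
    obtain ⟨m, hw, hi, hi', hj, hj'⟩ :=
      exists_factorEq_of_unbalanced hA.1 ih (i := i) (j := j) (by omega)
    exact hA.false_of_factorEq_of_pred_eq hw (by rw [hi', hj']; norm_num) i.succ_pos j.succ_pos
      (by rw [Nat.add_sub_cancel, hi, hi']) (by rw [Nat.add_sub_cancel, hj, hj'])

end IsSturmian

theorem windowSum_mul (b : ℕ → ℤ) (k M : ℕ) :
    windowSum b 0 (M * k) = ∑ l ∈ Finset.range M, windowSum b (l * k) k := by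
  induction M with
  | zero => simp
  | succ M ih => rw [Finset.sum_range_succ, ← ih, add_mul, one_mul, windowSum_add, zero_add]

theorem exists_forall_lt_add_of_bddAbove {f : ℕ → ℝ} (hf : BddAbove (Set.range f))
    (s : Finset ℕ) {δ : ℕ → ℝ} (hδ : ∀ k ∈ s, 0 < δ k) : ∃ x, ∀ k ∈ s, f (x + k) < f x + δ k := by
  rcases s.eq_empty_or_nonempty with rfl | hs
  · exact ⟨0, by simp⟩
  have hε : 0 < s.inf' hs δ := (Finset.lt_inf'_iff hs).mpr hδ
  obtain ⟨_, ⟨x, rfl⟩, hx⟩ := exists_lt_of_lt_csSup (Set.range_nonempty f) (sub_lt_self _ hε)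
  refine ⟨x, fun k hk => ?_⟩
  have := le_csSup hf ⟨x + k, rfl⟩
  have := Finset.inf'_le δ hk
  linarith

section Slope

variable {b : ℕ → ℤ} {α : ℝ} (hbal : IsBalanced b)
  (hslope : HasSlope b α)
include hbal hslope

theorem abs_windowSum_sub_le (i k : ℕ) : |(windowSum b i k : ℝ) - k * α| ≤ 1 := by
  rcases k.eq_zero_or_pos with rfl | hk
  · simp
  set c := windowSum b i k
  have hkR : (0 : ℝ) < k := by exact_mod_cast hk
  have hlim : Filter.Tendsto (fun M : ℕ => (windowSum b 0 (M * k) : ℝ) / ((M * k : ℕ) : ℝ))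
      Filter.atTop (nhds α) := by
    refine (hslope.comp (Filter.tendsto_atTop_mono (fun M => Nat.le_mul_of_pos_right M hk)
      Filter.tendsto_id)).congr fun M => ?_
    simp [windowSum]
  have hmem : ∀ M ≥ 1, (windowSum b 0 (M * k) : ℝ) / ((M * k : ℕ) : ℝ) ∈
      Set.Icc (((c : ℝ) - 1) / k) (((c : ℝ) + 1) / k) := by
    intro M hM
    have hMR : (0 : ℝ) < M := by exact_mod_cast hM
    have hlo : (M : ℤ) * (c - 1) ≤ windowSum b 0 (M * k) := by
      rw [windowSum_mul]
      simpa using Finset.card_nsmul_le_sum (Finset.range M) (fun l => windowSum b (l * k) k) (c - 1)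
        fun l _ => by linarith [hbal k (l * k) i]
    have hhi : windowSum b 0 (M * k) ≤ (M : ℤ) * (c + 1) := by
      rw [windowSum_mul]
      simpa using Finset.sum_le_card_nsmul (Finset.range M) (fun l => windowSum b (l * k) k) (c + 1)
        fun l _ => hbal k i (l * k)
    have hlo' : (M : ℝ) * (c - 1) ≤ windowSum b 0 (M * k) := by exact_mod_cast hlo
    have hhi' : (windowSum b 0 (M * k) : ℝ) ≤ (M : ℝ) * (c + 1) := by exact_mod_cast hhi
    push_cast
    rw [Set.mem_Icc, div_le_div_iff₀ hkR (by positivity), div_le_div_iff₀ (by positivity) hkR]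
    constructor <;> nlinarith
  have hα := isClosed_Icc.mem_of_tendsto hlim (Filter.eventually_atTop.mpr ⟨1, hmem⟩)
  rw [Set.mem_Icc, div_le_iff₀ hkR, le_div_iff₀ hkR] at hα
  rw [abs_le]
  constructor <;> linarith

theorem windowSum_eq_floor_or (hirr : Irrational α) (i k : ℕ) :
    windowSum b i k = ⌊(k : ℝ) * α⌋ ∨ windowSum b i k = ⌊(k : ℝ) * α⌋ + 1 := by
  rcases k.eq_zero_or_pos with rfl | hk
  · simp
  have hkα : Irrational ((k : ℝ) * α) := hirr.natCast_mul hk.ne'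
  have h := abs_le.mp (abs_windowSum_sub_le hbal hslope i k)
  have hlo : windowSum b i k - 1 ≤ ⌊(k : ℝ) * α⌋ := by
    rw [Int.le_floor]
    push_cast
    linarith
  have hhi : ⌊(k : ℝ) * α⌋ < windowSum b i k + 1 := by
    rw [Int.floor_lt]
    push_cast
    exact lt_of_le_of_ne (by linarith) fun he =>
      hkα.ne_int (windowSum b i k + 1) (by push_cast; linarith)
  omega

end Slope

section Extremal

variable {b : ℕ → ℤ} {α : ℝ} (hbal : IsBalanced b)
  (hslope : HasSlope b α) (hirr : Irrational α)
include hbal hslope hirr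

/-- Windows starting where `windowSum b 0 x - x α` is close to its supremum have the least
possible sums. -/
theorem exists_windowSum_eq_floor (n : ℕ) : ∃ x, ∀ k ≤ n, windowSum b x k = ⌊(k : ℝ) * α⌋ := by
  have hD : ∀ x k, (windowSum b 0 (x + k) : ℝ) - (x + k : ℕ) * α =
      windowSum b 0 x - x * α + (windowSum b x k - k * α) := fun x k => by
    rw [windowSum_add, zero_add]
    push_cast
    ring
  have hbdd : BddAbove (Set.range fun x => (windowSum b 0 x : ℝ) - x * α) :=
    ⟨1, by rintro _ ⟨x, rfl⟩; exact (abs_le.mp (abs_windowSum_sub_le hbal hslope 0 x)).2⟩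
  obtain ⟨x, hx⟩ := exists_forall_lt_add_of_bddAbove hbdd (Finset.range (n + 1))
    (δ := fun k => ⌊(k : ℝ) * α⌋ + 1 - k * α)
    fun k _ => by linarith [Int.lt_floor_add_one ((k : ℝ) * α)]
  refine ⟨x, fun k hk => (windowSum_eq_floor_or hbal hslope hirr x k).resolve_right fun h => ?_⟩
  have := hx k (Finset.mem_range.mpr (by omega))
  simp only [hD, h] at this
  push_cast at this
  linarith

/-- Windows starting where `windowSum b 0 x - x α` is close to its infimum have the greatest
possible sums. -/
theorem exists_windowSum_eq_floor_add_one (n : ℕ) :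
    ∃ x, ∀ k, 0 < k → k ≤ n → windowSum b x k = ⌊(k : ℝ) * α⌋ + 1 := by
  have hD : ∀ x k, -((windowSum b 0 (x + k) : ℝ) - (x + k : ℕ) * α) =
      -((windowSum b 0 x : ℝ) - x * α) - (windowSum b x k - k * α) := fun x k => by
    rw [windowSum_add, zero_add]
    push_cast
    ring
  have hbdd : BddAbove (Set.range fun x => -((windowSum b 0 x : ℝ) - x * α)) :=
    ⟨1, by rintro _ ⟨x, rfl⟩; linarith [(abs_le.mp (abs_windowSum_sub_le hbal hslope 0 x)).1]⟩
  obtain ⟨x, hx⟩ := exists_forall_lt_add_of_bddAbove hbdd (Finset.Icc 1 n)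
    (δ := fun k => k * α - ⌊(k : ℝ) * α⌋) fun k hk => by
      have hkα : Irrational ((k : ℝ) * α) :=
        hirr.natCast_mul (by have := (Finset.mem_Icc.mp hk).1; omega)
      exact sub_pos.mpr ((Int.floor_le _).lt_of_ne fun h => hkα.ne_int _ h.symm)
  refine ⟨x, fun k hk hkn => (windowSum_eq_floor_or hbal hslope hirr x k).resolve_left fun h => ?_⟩
  have := hx k (Finset.mem_Icc.mpr ⟨hk, hkn⟩)
  simp only [hD, h] at this
  linarith

end Extremal

theorem consSeq_zero_charSturmian {α : ℝ} (h0 : 0 ≤ α) (h1 : α < 1) :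
    ∀ t : ℕ, consSeq 0 (charSturmian α) t = ⌊((t + 1 : ℕ) : ℝ) * α⌋ - ⌊(t : ℝ) * α⌋
  | 0 => by simp [consSeq, Int.floor_eq_zero_iff.mpr ⟨h0, h1⟩]
  | t + 1 => by
    simp only [consSeq, charSturmian]
    push_cast
    ring_nf

theorem windowSum_consSeq (c : ℤ) (B : ℕ → ℤ) (k : ℕ) :
    windowSum (consSeq c B) 0 (k + 1) = c + windowSum B 0 k := by
  simp [windowSum, Finset.sum_range_succ', consSeq, add_comm]

theorem windowSum_consSeq_zero_charSturmian {α : ℝ} (h0 : 0 ≤ α) (h1 : α < 1) (k : ℕ) :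
    windowSum (consSeq 0 (charSturmian α)) 0 k = ⌊(k : ℝ) * α⌋ := by
  simp only [windowSum, zero_add, consSeq_zero_charSturmian h0 h1]
  rw [Finset.sum_range_sub (fun t : ℕ => ⌊(t : ℝ) * α⌋)]
  simp

theorem windowSum_consSeq_one_charSturmian {α : ℝ} (h0 : 0 ≤ α) (h1 : α < 1) (k : ℕ) :
    windowSum (consSeq 1 (charSturmian α)) 0 (k + 1) = ⌊((k + 1 : ℕ) : ℝ) * α⌋ + 1 := by
  rw [← windowSum_consSeq_zero_charSturmian h0 h1, windowSum_consSeq, windowSum_consSeq]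
  ring

theorem seqLexLe_of_windowSum_le {x y : ℕ → ℤ} (h : ∀ k, windowSum x 0 k ≤ windowSum y 0 k) :
    SeqLexLe x y := by
  classical
  by_cases hxy : x = y
  · exact Or.inl hxy
  have hne : ∃ n, x n ≠ y n := Function.ne_iff.mp hxy
  have hpre : ∀ m < Nat.find hne, x m = y m := fun m hm => not_not.mp (Nat.find_min hne hm)
  have hsum : windowSum x 0 (Nat.find hne) = windowSum y 0 (Nat.find hne) :=
    Finset.sum_congr rfl fun t ht => by rw [zero_add]; exact hpre t (Finset.mem_range.mp ht)
  have := h (Nat.find hne + 1)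
  rw [windowSum_succ, windowSum_succ, hsum] at this
  exact Or.inr ⟨Nat.find hne, hpre, lt_of_le_of_ne (by simpa using this) (Nat.find_spec hne)⟩

theorem InOrbitClosure.exists_windowSum_eq {a c : ℕ → ℤ} (h : InOrbitClosure a c) (k : ℕ) :
    ∃ i, windowSum c 0 k = windowSum a i k := by
  obtain ⟨i, hi⟩ := h k
  exact ⟨i, Finset.sum_congr rfl fun t ht => by rw [zero_add]; exact hi t (Finset.mem_range.mp ht)⟩

theorem inOrbitClosure_of_windowSum_eq {a c : ℕ → ℤ}
    (h : ∀ n, ∃ i, ∀ k ≤ n, windowSum c 0 k = windowSum a i k) : InOrbitClosure a c := by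
  intro n
  obtain ⟨i, hi⟩ := h n
  refine ⟨i, fun t ht => ?_⟩
  have := hi (t + 1) ht
  rw [windowSum_succ, windowSum_succ, hi t ht.le, zero_add] at this
  linarith

section OrbitClosure

variable {A : ℕ → ℤ} {α : ℝ} (hbal : IsBalanced A)
  (hslope : HasSlope A α) (hirr : Irrational α) (h0 : 0 ≤ α) (h1 : α < 1)
include hbal hslope hirr h0 h1

theorem inOrbitClosure_consSeq_zero_charSturmian : InOrbitClosure A (consSeq 0 (charSturmian α)) :=
  inOrbitClosure_of_windowSum_eq fun n => (exists_windowSum_eq_floor hbal hslope hirr n).imp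
    fun x hx k hk => by rw [windowSum_consSeq_zero_charSturmian h0 h1, hx k hk]

theorem inOrbitClosure_consSeq_one_charSturmian : InOrbitClosure A (consSeq 1 (charSturmian α)) :=
  inOrbitClosure_of_windowSum_eq fun n =>
    (exists_windowSum_eq_floor_add_one hbal hslope hirr n).imp fun x hx k hk => by
      rcases k with _ | k
      · simp
      · rw [windowSum_consSeq_one_charSturmian h0 h1, hx _ k.succ_pos hk]

theorem seqLexLe_consSeq_zero_charSturmian {c : ℕ → ℤ} (hc : InOrbitClosure A c) :
    SeqLexLe (consSeq 0 (charSturmian α)) c :=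
  seqLexLe_of_windowSum_le fun k => by
    obtain ⟨i, hi⟩ := hc.exists_windowSum_eq k
    rw [windowSum_consSeq_zero_charSturmian h0 h1, hi]
    rcases windowSum_eq_floor_or hbal hslope hirr i k with h | h <;> omega

theorem seqLexLe_consSeq_one_charSturmian {c : ℕ → ℤ} (hc : InOrbitClosure A c) :
    SeqLexLe c (consSeq 1 (charSturmian α)) :=
  seqLexLe_of_windowSum_le fun k => by
    rcases k with _ | k
    · simp
    obtain ⟨i, hi⟩ := hc.exists_windowSum_eq (k + 1)
    rw [windowSum_consSeq_one_charSturmian h0 h1, hi]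
    rcases windowSum_eq_floor_or hbal hslope hirr i (k + 1) with h | h <;> omega

end OrbitClosure

/-- If `A` is Sturmian with (irrational) slope `α` and `B` is the
characteristic Sturmian sequence of slope `α`, then the lexicographically
least sequence in the orbit closure of `A` is `0B` and the lexicographically
greatest one is `1B`. -/
theorem sturmian_orbitClosure_extremes (A : ℕ → ℤ) (α : ℝ)
    (hA : IsSturmian A) (hirr : Irrational α) (h0 : 0 < α) (h1 : α < 1)
    (hslope : HasSlope A α) :
    (InOrbitClosure A (consSeq 0 (charSturmian α)) ∧
      ∀ c : ℕ → ℤ, InOrbitClosure A c →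
        SeqLexLe (consSeq 0 (charSturmian α)) c) ∧
    (InOrbitClosure A (consSeq 1 (charSturmian α)) ∧
      ∀ c : ℕ → ℤ, InOrbitClosure A c →
        SeqLexLe c (consSeq 1 (charSturmian α))) := by
  have hbal := hA.isBalanced
  exact ⟨⟨inOrbitClosure_consSeq_zero_charSturmian hbal hslope hirr h0.le h1,
      fun c hc => seqLexLe_consSeq_zero_charSturmian hbal hslope hirr h0.le h1 hc⟩,
    ⟨inOrbitClosure_consSeq_one_charSturmian hbal hslope hirr h0.le h1,
      fun c hc => seqLexLe_consSeq_one_charSturmian hbal hslope hirr h0.le h1 hc⟩⟩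
end

section
/- Let k ≥ 2 and let B be a k-automatic sequence over the binary alphabet {0,1}. Define Θ(B) := sup({σ^k B : k ≥ 0} ∪ {σ^ℓ B̄ : ℓ ≥ 0}), the lexicographic supremum over all shifts of B and all shifts of its complement B̄. Then Θ(B) is k-automatic. -/
/-!
Θ(B) is the lexicographic supremum of the sequences `σ^i B` and `σ^i B̄`. Every prefix of Θ(B)
is a prefix of one of them: if `n` is least such that none agrees with Θ(B) up to position `n`,
the sequence that agrees with Θ(B) before `n`, is `0` at `n` and `1` afterwards still bounds
all of them but lies strictly below Θ(B). Hence `Θ(B) n = 1` iff some `σ^i B` or `σ^i B̄` has a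
lexicographically maximal prefix of length `n + 1` among all of them and a `1` at position `n`.
This is a first-order formula over `⟨ℕ, +, B⟩`, and relations on `ℕ^r` recognised by automata
reading base-`k` digits in parallel are closed under Boolean operations and quantifiers (a
projection of a regular language, followed by a right quotient by `0*` to allow the witness more
digits); addition is recognised by the carry automaton.
-/

open Set

section Lex

variable {α : Type*}

theorem seqLexLe_iff_toLex_le [LinearOrder α] {x y : ℕ → α} : SeqLexLe x y ↔ toLex x ≤ toLex y := by
  rw [le_iff_eq_or_lt, toLex_inj]
  rfl

-- Comparing truncations compares prefixes of length `n + 1`.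
def truncate (n : ℕ) (a : α) (x : ℕ → α) : ℕ → α := fun m => if m ≤ n then x m else a

theorem truncate_eq_truncate_iff {n : ℕ} {a : α} {x y : ℕ → α} :
    truncate n a x = truncate n a y ↔ ∀ m ≤ n, x m = y m := by
  refine ⟨fun h m hm => ?_, fun h => funext fun m => ?_⟩
  · simpa [truncate, hm] using congrFun h m
  · by_cases hm : m ≤ n <;> simp [truncate, hm, h]

theorem toLex_truncate_lt_toLex_truncate_iff [LinearOrder α] {n : ℕ} {a : α} {x y : ℕ → α} :
    toLex (truncate n a x) < toLex (truncate n a y) ↔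
      ∃ t ≤ n, (∀ s < t, x s = y s) ∧ x t < y t := by
  constructor
  · rintro ⟨t, hagree, hlt⟩
    have ht : t ≤ n := by
      by_contra ht
      simp [truncate, ht] at hlt
    refine ⟨t, ht, fun s hs => ?_, by simpa [truncate, ht] using hlt⟩
    simpa [truncate, (hs.trans_le ht).le] using hagree s hs
  · rintro ⟨t, ht, hagree, hlt⟩
    refine ⟨t, fun s hs => ?_, by simpa [truncate, ht] using hlt⟩
    simp [truncate, (hs.trans_le ht).le, hagree s hs]

theorem toLex_truncate_mono [LinearOrder α] {n : ℕ} {a : α} {x y : ℕ → α} (h : toLex x ≤ toLex y) :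
    toLex (truncate n a x) ≤ toLex (truncate n a y) := by
  rcases h.eq_or_lt with h | ⟨t, hagree, hlt⟩
  · rw [toLex_inj.1 h]
  by_cases ht : t ≤ n
  · exact (toLex_truncate_lt_toLex_truncate_iff.2 ⟨t, ht, hagree, hlt⟩).le
  · exact (congrArg toLex (truncate_eq_truncate_iff.2 fun m hm => hagree m (by omega))).le

theorem toLex_lt_of_le_of_exists_ne [LinearOrder α] {n : ℕ} {x y z : ℕ → α}
    (hxy : toLex x ≤ toLex y) (hyz : ∀ m < n, y m = z m) (hne : ∃ m < n, x m ≠ y m) :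
    toLex x < toLex z := by
  classical
  obtain ⟨htn, hxy_t⟩ := Nat.find_spec hne
  have hagree : ∀ s < Nat.find hne, x s = y s := fun s hs => by
    by_contra h
    exact Nat.find_min hne hs ⟨by omega, h⟩
  refine ⟨Nat.find hne, fun s hs => (hagree s hs).trans (hyz s (by omega)), ?_⟩
  show x _ < z _
  rw [← hyz _ htn]
  exact (Pi.apply_le_of_toLex hxy hagree).lt_of_ne hxy_t

end Lex

section LUB

variable {ι : Type*} {f : ι → ℕ → Bool} {θ : ℕ → Bool}

theorem exists_eqOn_of_isLUB [Nonempty ι] (hθ : IsLUB (range fun i => toLex (f i)) (toLex θ))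
    (n : ℕ) : ∃ i, ∀ m < n, f i m = θ m := by
  have hle : ∀ i, toLex (f i) ≤ toLex θ := fun i => hθ.1 ⟨i, rfl⟩
  induction n with
  | zero => exact ⟨Classical.arbitrary ι, by simp⟩
  | succ n ih =>
    by_contra! hnone
    have hdrop : ∀ i, (∀ m < n, f i m = θ m) → f i n = false ∧ θ n = true := by
      intro i hi
      obtain ⟨m, hm, hne⟩ := hnone i
      obtain rfl : m = n := by
        by_contra h
        exact hne (hi m (by omega))
      exact Bool.lt_iff.1 ((Pi.apply_le_of_toLex (hle i) hi).lt_of_ne hne)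
    -- `C` bounds every `f i` but lies below `θ`.
    let C : ℕ → Bool := fun m => if m < n then θ m else decide (n < m)
    have hC : ∀ i, toLex (f i) ≤ toLex C := by
      intro i
      by_cases hi : ∀ m < n, f i m = θ m
      · refine Pi.toLex_monotone fun m => ?_
        rcases lt_trichotomy m n with h | rfl | h
        · simp [C, h, hi m h]
        · simp [C, (hdrop i hi).1]
        · simp [C, h, h.not_gt]
      · push Not at hi
        exact (toLex_lt_of_le_of_exists_ne (hle i) (fun m hm => by simp [C, hm]) hi).le
    obtain ⟨i, hi⟩ := ih
    have hCθ : toLex C < toLex θ :=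
      ⟨n, fun m hm => by simp [C, hm], by simp [C, (hdrop i hi).2]⟩
    exact hCθ.not_ge (hθ.2 (forall_mem_range.2 hC))

theorem apply_eq_true_iff_of_isLUB [Nonempty ι]
    (hθ : IsLUB (range fun i => toLex (f i)) (toLex θ)) (n : ℕ) :
    θ n = true ↔ ∃ i, (∀ j, toLex (truncate n false (f j)) ≤ toLex (truncate n false (f i))) ∧
      f i n = true := by
  obtain ⟨i₀, hi₀⟩ := exists_eqOn_of_isLUB hθ (n + 1)
  have htrunc : truncate n false (f i₀) = truncate n false θ :=
    truncate_eq_truncate_iff.2 fun m hm => hi₀ m (by omega)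
  have hle : ∀ i, toLex (truncate n false (f i)) ≤ toLex (truncate n false θ) :=
    fun i => toLex_truncate_mono (hθ.1 ⟨i, rfl⟩)
  constructor
  · intro hn
    refine ⟨i₀, fun j => htrunc ▸ hle j, by rw [hi₀ n n.lt_succ_self, hn]⟩
  · rintro ⟨i, hmax, hi⟩
    have heq : truncate n false (f i) = truncate n false θ :=
      toLex_inj.1 (le_antisymm (hle i) (htrunc ▸ hmax i₀))
    rw [← truncate_eq_truncate_iff.1 heq n le_rfl, hi]

end LUB

namespace Language

variable {α β : Type*}

theorem IsRegular.preimage_map {L : Language β} (h : L.IsRegular) (f : α → β) :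
    IsRegular (T := α) (List.map f ⁻¹' L) := by
  obtain ⟨σ, _, M, rfl⟩ := h
  exact ⟨σ, inferInstance, M.comap f, M.accepts_comap f⟩

theorem IsRegular.map {L : Language α} (h : L.IsRegular) (f : α → β) :
    (L.map f).IsRegular := by
  classical
  obtain ⟨σ, _, M, rfl⟩ := h
  let N : NFA β σ := ⟨fun q b => {q' | ∃ a, f a = b ∧ M.step q a = q'}, {M.start}, M.accept⟩
  have hN : ∀ y q q', q' ∈ N.evalFrom {q} y ↔ ∃ x, x.map f = y ∧ M.evalFrom q x = q' := by
    intro y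
    induction y with
    | nil => simp [eq_comm]
    | cons b y ih =>
      intro q q'
      rw [NFA.evalFrom_cons, NFA.stepSet_singleton, NFA.mem_evalFrom_iff_exists]
      constructor
      · rintro ⟨_, ⟨a, rfl, rfl⟩, hq'⟩
        obtain ⟨x, rfl, rfl⟩ := (ih _ _).1 hq'
        exact ⟨a :: x, rfl, rfl⟩
      · rintro ⟨_ | ⟨a, x⟩, hx, rfl⟩
        · cases hx
        · obtain ⟨rfl, rfl⟩ := List.cons_eq_cons.1 hx
          exact ⟨_, ⟨a, rfl, rfl⟩, (ih _ _).2 ⟨x, rfl, rfl⟩⟩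
  refine ⟨Set σ, inferInstance, N.toDFA, ?_⟩
  ext y
  rw [N.toDFA_correct, NFA.mem_accepts]
  change (∃ q ∈ M.accept, q ∈ N.evalFrom {M.start} y) ↔ ∃ x, M.evalFrom M.start x ∈ M.accept ∧ x.map f = y
  simp only [hN]
  constructor
  · rintro ⟨_, hq, x, hx, rfl⟩
    exact ⟨x, hq, hx⟩
  · rintro ⟨x, hq, hx⟩
    exact ⟨_, hq, x, hx, rfl⟩

theorem IsRegular.setOf_exists_append_mem {L : Language α} (h : L.IsRegular) (K : Set (List α)) :
    IsRegular (T := α) {x | ∃ y ∈ K, x ++ y ∈ L} := by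
  obtain ⟨σ, _, M, rfl⟩ := h
  refine ⟨σ, inferInstance, ⟨M.step, M.start, {q | ∃ y ∈ K, M.evalFrom q y ∈ M.accept}⟩, ?_⟩
  ext x
  change (∃ y ∈ K, M.evalFrom (M.evalFrom M.start x) y ∈ M.accept) ↔
    ∃ y ∈ K, M.evalFrom M.start (x ++ y) ∈ M.accept
  simp only [DFA.evalFrom_of_append]

end Language

def ofDigitTuples (k : ℕ) {r : ℕ} (w : List (Fin r → Fin k)) (j : Fin r) : ℕ :=
  Nat.ofDigits k (w.map fun d => (d j : ℕ))

section OfDigitTuples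

variable {k r : ℕ}

@[simp]
theorem ofDigitTuples_nil (j : Fin r) : ofDigitTuples k [] j = 0 := rfl

@[simp]
theorem ofDigitTuples_cons (d : Fin r → Fin k) (w : List (Fin r → Fin k)) (j : Fin r) :
    ofDigitTuples k (d :: w) j = d j + k * ofDigitTuples k w j := by
  simp [ofDigitTuples, Nat.ofDigits_cons]

theorem ofDigitTuples_append_replicate_zero [NeZero k] (w : List (Fin r → Fin k)) (n : ℕ) :
    ofDigitTuples k (w ++ List.replicate n 0) = ofDigitTuples k w := by
  funext j
  simp [ofDigitTuples, Nat.ofDigits_append_replicate_zero]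

theorem ofDigitTuples_eq_snoc (u : List (Fin (r + 1) → Fin k)) :
    ofDigitTuples k u = Fin.snoc (ofDigitTuples k (u.map Fin.init))
      (Nat.ofDigits k (u.map fun d => (d (Fin.last r) : ℕ))) := by
  funext j
  induction j using Fin.lastCases <;> simp [ofDigitTuples, Fin.init, Function.comp_def]

theorem ofDigitTuples_map_snoc_zip {a : List (Fin r → Fin k)} {b : List (Fin k)}
    (h : a.length = b.length) :
    ofDigitTuples k ((a.zip b).map fun p => Fin.snoc (α := fun _ => Fin k) p.1 p.2) =
      Fin.snoc (ofDigitTuples k a) (Nat.ofDigits k (b.map Fin.val)) := by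
  rw [ofDigitTuples_eq_snoc]
  simp [List.map_map, Function.comp_def, List.map_fst_zip h.le]
  conv_rhs => rw [← List.map_snd_zip h.ge, List.map_map]
  rfl

theorem map_init_map_snoc_zip {a : List (Fin r → Fin k)} {b : List (Fin k)}
    (h : a.length ≤ b.length) :
    ((a.zip b).map fun p => Fin.snoc (α := fun _ => Fin k) p.1 p.2).map Fin.init = a := by
  simp [List.map_map, Function.comp_def, List.map_fst_zip h]

theorem exists_ofDigits_eq (hk : 2 ≤ k) (y : ℕ) :
    ∃ ds : List (Fin k), Nat.ofDigits k (ds.map Fin.val) = y := by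
  have : NeZero k := ⟨by omega⟩
  refine ⟨(Nat.digits k y).map (Fin.ofNat k), ?_⟩
  conv_rhs => rw [← Nat.ofDigits_digits k y, ← List.map_id (Nat.digits k y)]
  simp only [List.map_map]
  exact congrArg _ <| List.map_congr_left fun d hd => Nat.mod_eq_of_lt (Nat.digits_lt_base hk hd)

end OfDigitTuples

-- Words are read least significant digit first; the language contains every representation
-- of each tuple, padded with any number of zero digits.
def IsKAutomaticRel (k : ℕ) {r : ℕ} (P : (Fin r → ℕ) → Prop) : Prop :=
  Language.IsRegular {w : List (Fin r → Fin k) | P (ofDigitTuples k w)}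

namespace IsKAutomaticRel

variable {k r : ℕ} {P Q : (Fin r → ℕ) → Prop}

theorem of_iff (h : IsKAutomaticRel k P) (hPQ : ∀ x, P x ↔ Q x) : IsKAutomaticRel k Q := by
  rwa [show Q = P from funext fun x => propext (hPQ x).symm]

theorem not (h : IsKAutomaticRel k P) : IsKAutomaticRel k fun x => ¬ P x :=
  Language.IsRegular.compl h

theorem and (hP : IsKAutomaticRel k P) (hQ : IsKAutomaticRel k Q) :
    IsKAutomaticRel k fun x => P x ∧ Q x :=
  Language.IsRegular.inf hP hQ

theorem or (hP : IsKAutomaticRel k P) (hQ : IsKAutomaticRel k Q) :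
    IsKAutomaticRel k fun x => P x ∨ Q x :=
  Language.IsRegular.add hP hQ

theorem imp (hP : IsKAutomaticRel k P)
    (hQ : IsKAutomaticRel k Q) : IsKAutomaticRel k fun x => P x → Q x :=
  (hP.not.or hQ).of_iff fun _ => imp_iff_not_or.symm

theorem iff (hP : IsKAutomaticRel k P)
    (hQ : IsKAutomaticRel k Q) : IsKAutomaticRel k fun x => P x ↔ Q x :=
  ((hP.imp hQ).and (hQ.imp hP)).of_iff fun _ => iff_iff_implies_and_implies.symm

theorem comp {r' : ℕ} (h : IsKAutomaticRel k P) (ρ : Fin r → Fin r') :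
    IsKAutomaticRel k fun x : Fin r' → ℕ => P (x ∘ ρ) := by
  have hρ : ∀ w : List (Fin r' → Fin k), ofDigitTuples k (w.map (· ∘ ρ)) = ofDigitTuples k w ∘ ρ :=
    fun w => funext fun j => by simp [ofDigitTuples, Function.comp_def]
  have := Language.IsRegular.preimage_map h (· ∘ ρ)
  refine (congrArg Language.IsRegular (Language.ext fun w => ?_)).mpr this
  change _ ↔ P (ofDigitTuples k (w.map (· ∘ ρ)))
  rw [hρ]
  rfl

theorem exists_snoc (hk : 2 ≤ k) {P : (Fin (r + 1) → ℕ) → Prop} (h : IsKAutomaticRel k P) :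
    IsKAutomaticRel k fun x => ∃ y, P (Fin.snoc x y) := by
  have : NeZero k := ⟨by omega⟩
  -- `y` may need more digits than `x`, hence the quotient by words of zero digits.
  have := (Language.IsRegular.map h Fin.init).setOf_exists_append_mem
    (range fun n => List.replicate n 0)
  refine (congrArg Language.IsRegular (Language.ext fun w => ?_)).mpr this
  change (∃ y, P (Fin.snoc (ofDigitTuples k w) y)) ↔
    ∃ z ∈ range fun n => List.replicate n 0, ∃ u, P (ofDigitTuples k u) ∧ u.map Fin.init = w ++ z
  simp only [mem_range, exists_exists_eq_and]
  constructor
  · rintro ⟨y, hy⟩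
    obtain ⟨ds, rfl⟩ := exists_ofDigits_eq hk y
    let a := w ++ List.replicate ds.length 0
    let b := ds ++ List.replicate w.length 0
    have hab : a.length = b.length := by simp [a, b, add_comm]
    refine ⟨ds.length, _, ?_, map_init_map_snoc_zip hab.le⟩
    rwa [ofDigitTuples_map_snoc_zip hab, ofDigitTuples_append_replicate_zero, List.map_append,
      List.map_replicate, Fin.val_zero, Nat.ofDigits_append_replicate_zero]
  · rintro ⟨n, u, hu, hmap⟩
    rw [ofDigitTuples_eq_snoc, hmap, ofDigitTuples_append_replicate_zero] at hu
    exact ⟨_, hu⟩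

theorem forall_snoc (hk : 2 ≤ k) {P : (Fin (r + 1) → ℕ) → Prop} (h : IsKAutomaticRel k P) :
    IsKAutomaticRel k fun x => ∀ y, P (Fin.snoc x y) :=
  (h.not.exists_snoc hk).not.of_iff fun _ => not_exists_not

end IsKAutomaticRel

theorem Nat.add_mul_eq_add_mul_iff {k s d A B : ℕ} (hs : s < 2 * k) (hd : d < k) :
    s + k * A = d + k * B ↔ (s = d ∧ A = B) ∨ (s = d + k ∧ A + 1 = B) := by
  constructor
  · intro h
    rcases lt_trichotomy A B with hAB | rfl | hAB
    · obtain ⟨e, rfl⟩ := Nat.exists_eq_add_of_lt hAB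
      have : k * e < k := by nlinarith
      have he : e = 0 := by by_contra he; nlinarith [Nat.pos_of_ne_zero he]
      subst he
      right; constructor <;> nlinarith
    · left; constructor <;> omega
    · obtain ⟨e, rfl⟩ := Nat.exists_eq_add_of_lt hAB
      nlinarith
  · rintro (⟨rfl, rfl⟩ | ⟨rfl, rfl⟩) <;> ring

-- The state is the carry of `x 1 + x 2` so far, or `none` once a digit of `x 0` was wrong.
def carryDFA (k : ℕ) : DFA (Fin 3 → Fin k) (Option Bool) where
  step
    | some c, d =>
      if (d 1 : ℕ) + d 2 + c.toNat = d 0 then some false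
      else if (d 1 : ℕ) + d 2 + c.toNat = d 0 + k then some true
      else none
    | none, _ => none
  start := some false
  accept := {some false}

theorem carryDFA_evalFrom_none {k : ℕ} (w : List (Fin 3 → Fin k)) :
    (carryDFA k).evalFrom none w = none := by
  induction w with
  | nil => rfl
  | cons d w ih => exact ih

theorem carryDFA_evalFrom_some {k : ℕ} (w : List (Fin 3 → Fin k)) (c c' : Bool) :
    (carryDFA k).evalFrom (some c) w = some c' ↔
      ofDigitTuples k w 1 + ofDigitTuples k w 2 + c.toNat =
        ofDigitTuples k w 0 + k ^ w.length * c'.toNat := by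
  induction w generalizing c with
  | nil => cases c <;> cases c' <;> simp
  | cons d w ih =>
    have hs : (d 1 : ℕ) + d 2 + c.toNat < 2 * k := by
      have := (d 1).isLt; have := (d 2).isLt; have := c.toNat_le; omega
    have hrepr := Nat.add_mul_eq_add_mul_iff (A := ofDigitTuples k w 1 + ofDigitTuples k w 2)
      (B := ofDigitTuples k w 0 + k ^ w.length * c'.toNat) hs (d 0).isLt
    have hk : 0 < k := (d 0).pos
    have hstep : (carryDFA k).step (some c) d =
        if (d 1 : ℕ) + d 2 + c.toNat = d 0 then some false
        else if (d 1 : ℕ) + d 2 + c.toNat = d 0 + k then some true else none := rfl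
    rw [DFA.evalFrom_cons, hstep]
    simp only [ofDigitTuples_cons, List.length_cons]
    rw [show (d 1 : ℕ) + k * ofDigitTuples k w 1 + (d 2 + k * ofDigitTuples k w 2) + c.toNat =
        d 1 + d 2 + c.toNat + k * (ofDigitTuples k w 1 + ofDigitTuples k w 2) by ring,
      show (d 0 : ℕ) + k * ofDigitTuples k w 0 + k ^ (w.length + 1) * c'.toNat =
        d 0 + k * (ofDigitTuples k w 0 + k ^ w.length * c'.toNat) by ring, hrepr]
    split_ifs with h1 h2
    · rw [ih]; simp only [h1, Bool.toNat_false, add_zero, true_and]; omega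
    · rw [ih]; simp only [h2, Bool.toNat_true, true_and]; omega
    · simp only [carryDFA_evalFrom_none, reduceCtorEq, false_iff]; omega

theorem isKAutomaticRel_add {k : ℕ} : IsKAutomaticRel k fun x : Fin 3 → ℕ => x 0 = x 1 + x 2 := by
  refine ⟨Option Bool, inferInstance, carryDFA k, Language.ext fun w => ?_⟩
  change (carryDFA k).evalFrom (some false) w = some false ↔
    ofDigitTuples k w 0 = ofDigitTuples k w 1 + ofDigitTuples k w 2
  rw [carryDFA_evalFrom_some]
  simp [eq_comm]

theorem isKAutomatic_iff_isKAutomaticRel {k : ℕ} {a : ℕ → Bool} :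
    IsKAutomatic k a ↔ IsKAutomaticRel k fun x : Fin 1 → ℕ => a (x 0) = true := by
  have hval : ∀ w : List (Fin k), ofDigitTuples k (w.map fun (d : Fin k) (_ : Fin 1) => d) 0 =
      Nat.ofDigits k (w.map Fin.val) := fun w => by simp [ofDigitTuples, Function.comp_def]
  constructor
  · rintro ⟨n, δ, q₀, τ, h⟩
    refine ⟨Fin n, inferInstance, ⟨fun q d => δ q (d 0), q₀, {q | τ q = true}⟩,
      Language.ext fun w => ?_⟩
    change τ (w.foldl (fun q d => δ q (d 0)) q₀) = true ↔ a (ofDigitTuples k w 0) = true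
    rw [h _ (w.map (· 0)) (by simp [ofDigitTuples, Function.comp_def]), List.foldl_map]
  · rintro ⟨σ, _, M, hM⟩
    let M' := (DFA.reindex (Fintype.equivFin σ) M).comap fun (d : Fin k) (_ : Fin 1) => d
    classical
    refine ⟨_, M'.step, M'.start, fun q => decide (q ∈ M'.accept), fun m w hw => ?_⟩
    rw [Bool.eq_iff_iff, decide_eq_true_iff]
    change a m = true ↔ w ∈ M'.accepts
    rw [DFA.accepts_comap, DFA.accepts_reindex, hM]
    change _ ↔ a (ofDigitTuples k (w.map fun (d : Fin k) (_ : Fin 1) => d) 0) = true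
    rw [hval, hw]

theorem isKAutomaticRel_le {k : ℕ} (hk : 2 ≤ k) :
    IsKAutomaticRel k fun x : Fin 2 → ℕ => x 0 ≤ x 1 :=
  ((isKAutomaticRel_add.comp ![1, 0, 2]).exists_snoc hk).of_iff fun x =>
    show (∃ y, x 1 = x 0 + y) ↔ x 0 ≤ x 1 from le_iff_exists_add.symm

theorem IsKAutomaticRel.apply_add {k : ℕ} (hk : 2 ≤ k) {a : ℕ → Bool}
    (ha : IsKAutomaticRel k fun x : Fin 1 → ℕ => a (x 0) = true) :
    IsKAutomaticRel k fun x : Fin 2 → ℕ => a (x 0 + x 1) = true :=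
  (((isKAutomaticRel_add.comp ![2, 0, 1]).and (ha.comp ![2])).exists_snoc hk).of_iff fun x =>
    show (∃ y, y = x 0 + x 1 ∧ a y = true) ↔ _ from exists_eq_left

def shiftOrCompl (B : ℕ → Bool) : ℕ × Bool → ℕ → Bool
  | (i, false), n => B (n + i)
  | (i, true), n => !B (n + i)

section ShiftOrCompl

variable {k : ℕ} {B : ℕ → Bool}

theorem isKAutomaticRel_shiftOrCompl (hk : 2 ≤ k)
    (hB : IsKAutomaticRel k fun x : Fin 1 → ℕ => B (x 0) = true) {r : ℕ} (b : Bool) (i n : Fin r) :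
    IsKAutomaticRel k fun x : Fin r → ℕ => shiftOrCompl B (x i, b) (x n) = true := by
  have h := (hB.apply_add hk).comp ![n, i]
  cases b
  · exact h
  · exact h.not.of_iff fun _ => by simp [shiftOrCompl]

theorem isKAutomaticRel_truncate_lt (hk : 2 ≤ k)
    (hB : IsKAutomaticRel k fun x : Fin 1 → ℕ => B (x 0) = true) (b c : Bool) :
    IsKAutomaticRel k fun x : Fin 3 → ℕ =>
      toLex (truncate (x 0) false (shiftOrCompl B (x 1, b))) <
        toLex (truncate (x 0) false (shiftOrCompl B (x 2, c))) := by
  have hW (r : ℕ) := isKAutomaticRel_shiftOrCompl (r := r) hk hB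
  have hagree := (((isKAutomaticRel_le hk).comp ![3, 4]).not.imp
    ((hW 5 b 1 4).iff (hW 5 c 2 4))).forall_snoc hk
  have hfirst := ((isKAutomaticRel_le hk).comp ![3, 0]).and
    (hagree.and ((hW 4 b 1 3).not.and (hW 4 c 2 3)))
  refine (hfirst.exists_snoc hk).of_iff fun x => ?_
  rw [toLex_truncate_lt_toLex_truncate_iff]
  refine exists_congr fun t => and_congr Iff.rfl (and_congr (forall_congr' fun s => ?_) ?_)
  · exact imp_congr not_le Bool.eq_iff_iff.symm
  · rw [Bool.lt_iff, Bool.not_eq_true]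
    exact Iff.rfl

theorem isKAutomaticRel_exists_max_prefix (hk : 2 ≤ k)
    (hB : IsKAutomaticRel k fun x : Fin 1 → ℕ => B (x 0) = true) :
    IsKAutomaticRel k fun x : Fin 1 → ℕ => ∃ p, (∀ q,
      toLex (truncate (x 0) false (shiftOrCompl B q)) ≤
        toLex (truncate (x 0) false (shiftOrCompl B p))) ∧ shiftOrCompl B p (x 0) = true := by
  have hmax (b : Bool) := ((((isKAutomaticRel_truncate_lt hk hB b false).not.and
    (isKAutomaticRel_truncate_lt hk hB b true).not).forall_snoc hk).and
    (isKAutomaticRel_shiftOrCompl hk hB b 1 0))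
  refine (((hmax false).or (hmax true)).exists_snoc hk).of_iff fun x => ?_
  simp only [Prod.exists, Prod.forall, Bool.exists_bool, Bool.forall_bool, ← not_lt]
  exact Iff.rfl

end ShiftOrCompl

/-- If `B` is a `k`-automatic binary sequence, then
`Θ(B) = sup({σ^i B : i ≥ 0} ∪ {σ^ℓ B̄ : ℓ ≥ 0})` (the least upper bound, in the
lexicographic order with `false < true`, of all shifts of `B` and of its
letterwise complement `B̄`) is `k`-automatic. -/
theorem theta_automatic (k : ℕ) (hk : 2 ≤ k) (B : ℕ → Bool)
    (hB : IsKAutomatic k B) (Θ : ℕ → Bool)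
    (hubB : ∀ i : ℕ, SeqLexLe (fun n => B (n + i)) Θ)
    (hubC : ∀ l : ℕ, SeqLexLe (fun n => !B (n + l)) Θ)
    (hlub : ∀ C : ℕ → Bool, (∀ i : ℕ, SeqLexLe (fun n => B (n + i)) C) →
      (∀ l : ℕ, SeqLexLe (fun n => !B (n + l)) C) → SeqLexLe Θ C) :
    IsKAutomatic k Θ := by
  have hθ : IsLUB (range fun p => toLex (shiftOrCompl B p)) (toLex Θ) := by
    refine ⟨forall_mem_range.2 fun ⟨i, b⟩ => ?_, fun C hC => ?_⟩
    · cases b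
      · exact seqLexLe_iff_toLex_le.1 (hubB i)
      · exact seqLexLe_iff_toLex_le.1 (hubC i)
    · rw [mem_upperBounds, forall_mem_range] at hC
      exact seqLexLe_iff_toLex_le.1 <| hlub (ofLex C)
        (fun i => seqLexLe_iff_toLex_le.2 (hC (i, false)))
        (fun l => seqLexLe_iff_toLex_le.2 (hC (l, true)))
  exact isKAutomatic_iff_isKAutomaticRel.2 <|
    (isKAutomaticRel_exists_max_prefix hk (isKAutomatic_iff_isKAutomaticRel.1 hB)).of_iff
      fun x => (apply_eq_true_iff_of_isLUB hθ (x 0)).symm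
end
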